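/- Fix n ≥ 1. For μ ∈ {x,y,z}ⁿ and s ∈ {+1,−1}ⁿ, let P_{μ,s} := ⊗_{i=1}^{n} (I₂ + s_i σ_{μ_i})/2 and τ_{μ,s} := ⊗_{i=1}^{n} ( 3·(I₂ + s_i σ_{μ_i})/2 − I₂ ) as 2ⁿ×2ⁿ matrices. Then for every 2ⁿ×2ⁿ complex matrix A: (1/3ⁿ) Σ_{μ∈{x,y,z}ⁿ} Σ_{s∈{±1}ⁿ} Tr[P_{μ,s} A] · τ_{μ,s} = A. That is, the n-qubit random-Pauli shadow estimator is unbiased: the tensor product of single-qubit inverse maps inverts the n-qubit Pauli measurement channel. -/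
import Mathlib


open Matrix BigOperators

/-- The Pauli matrices `σ_x, σ_y, σ_z`. -/
noncomputable def pauli : Fin 3 → Matrix (Fin 2) (Fin 2) ℂ :=
  ![!![0, 1; 1, 0], !![0, -Complex.I; Complex.I, 0], !![1, 0; 0, -1]]

/-- The Pauli eigenprojector `(I + s·σ_μ)/2`, with `s = +1` for `true`, `−1` for `false`. -/
noncomputable def pauliProj (μ : Fin 3) (s : Bool) : Matrix (Fin 2) (Fin 2) ℂ :=
  (2 : ℂ)⁻¹ • ((1 : Matrix (Fin 2) (Fin 2) ℂ) + (if s then (1 : ℂ) else -1) • pauli μ)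

/-- Single-qubit classical shadow `3·P_{μ,s} − I` of the projector `P_{μ,s}`. -/
noncomputable def pauliTau (μ : Fin 3) (s : Bool) : Matrix (Fin 2) (Fin 2) ℂ :=
  (3 : ℂ) • pauliProj μ s - 1

/-- `n`-fold tensor product `P_{μ,s} = ⊗_i (I + s_i σ_{μ_i})/2`, realized on the index
set `Fin n → Fin 2` by entrywise products. -/
noncomputable def bigProj {n : ℕ} (μ : Fin n → Fin 3) (s : Fin n → Bool) :
    Matrix (Fin n → Fin 2) (Fin n → Fin 2) ℂ :=
  Matrix.of fun i j => ∏ r : Fin n, pauliProj (μ r) (s r) (i r) (j r)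

/-- `n`-fold tensor product `τ_{μ,s} = ⊗_i (3·(I + s_i σ_{μ_i})/2 − I)`. -/
noncomputable def bigTau {n : ℕ} (μ : Fin n → Fin 3) (s : Fin n → Bool) :
    Matrix (Fin n → Fin 2) (Fin n → Fin 2) ℂ :=
  Matrix.of fun i j => ∏ r : Fin n, pauliTau (μ r) (s r) (i r) (j r)

/-- Single-qubit kernel identity. -/
lemma single_kernel (a b i j : Fin 2) :
    ∑ μ : Fin 3, ∑ s : Bool, pauliProj μ s a b * pauliTau μ s i j
      = 3 * ((if b = i then (1:ℂ) else 0) * (if a = j then 1 else 0)) := by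
  simp only [pauliTau, pauliProj, Fin.sum_univ_three, Fintype.sum_bool, pauli,
    Matrix.smul_apply, Matrix.sub_apply, Matrix.add_apply, Matrix.one_apply, smul_eq_mul,
    if_true, Bool.false_eq_true, if_false]
  fin_cases a <;> fin_cases b <;> fin_cases i <;> fin_cases j <;>
    simp [Matrix.cons_val_zero, Matrix.cons_val_one, Matrix.head_cons] <;>
    ring_nf <;> simp [Complex.I_sq] <;> ring

lemma prod_delta {n : ℕ} (b i : Fin n → Fin 2) :
    (∏ r : Fin n, (if b r = i r then (1:ℂ) else 0)) = if b = i then 1 else 0 := by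
  split_ifs with h
  · subst h; simp
  · obtain ⟨r, hr⟩ := Function.ne_iff.mp h
    exact Finset.prod_eq_zero (Finset.mem_univ r) (by simp [hr])

lemma sum_fn_prod {n : ℕ} {α : Type*} [Fintype α] [DecidableEq α] (g : Fin n → α → ℂ) :
    ∑ v : Fin n → α, ∏ r : Fin n, g r (v r) = ∏ r : Fin n, ∑ x : α, g r x := by
  rw [Finset.prod_univ_sum, Fintype.piFinset_univ]

lemma sum_sum_prod {n : ℕ} (f : Fin n → Fin 3 → Bool → ℂ) :
    ∑ μ : Fin n → Fin 3, ∑ s : Fin n → Bool, ∏ r : Fin n, f r (μ r) (s r)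
      = ∏ r : Fin n, ∑ μ0 : Fin 3, ∑ s0 : Bool, f r μ0 s0 := by
  have h1 : ∀ μ : Fin n → Fin 3, ∑ s : Fin n → Bool, ∏ r : Fin n, f r (μ r) (s r)
      = ∏ r : Fin n, ∑ s0 : Bool, f r (μ r) s0 := fun μ => sum_fn_prod (fun r => f r (μ r))
  simp_rw [h1]
  exact sum_fn_prod (fun r μ0 => ∑ s0 : Bool, f r μ0 s0)

lemma sum4_swap {α β γ δ : Type*} [Fintype α] [Fintype β] [Fintype γ] [Fintype δ]
    (f : α → β → γ → δ → ℂ) :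
    ∑ x : α, ∑ y : β, ∑ z : γ, ∑ w : δ, f x y z w
      = ∑ z : γ, ∑ w : δ, ∑ x : α, ∑ y : β, f x y z w :=
  calc ∑ x : α, ∑ y : β, ∑ z : γ, ∑ w : δ, f x y z w
      = ∑ x : α, ∑ z : γ, ∑ y : β, ∑ w : δ, f x y z w :=
        Finset.sum_congr rfl fun x _ => Finset.sum_comm
    _ = ∑ z : γ, ∑ x : α, ∑ y : β, ∑ w : δ, f x y z w := Finset.sum_comm
    _ = ∑ z : γ, ∑ x : α, ∑ w : δ, ∑ y : β, f x y z w :=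
        Finset.sum_congr rfl fun z _ => Finset.sum_congr rfl fun x _ => Finset.sum_comm
    _ = ∑ z : γ, ∑ w : δ, ∑ x : α, ∑ y : β, f x y z w :=
        Finset.sum_congr rfl fun z _ => Finset.sum_comm

/-- The `n`-qubit kernel identity. -/
lemma big_kernel {n : ℕ} (a b i j : Fin n → Fin 2) :
    ∑ μ : Fin n → Fin 3, ∑ s : Fin n → Bool, bigProj μ s a b * bigTau μ s i j
      = (3:ℂ)^n * ((if b = i then (1:ℂ) else 0) * (if a = j then 1 else 0)) := by
  have : ∀ (μ : Fin n → Fin 3) (s : Fin n → Bool), bigProj μ s a b * bigTau μ s i j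
      = ∏ r : Fin n, (pauliProj (μ r) (s r) (a r) (b r) * pauliTau (μ r) (s r) (i r) (j r)) := by
    intro μ s
    simp [bigProj, bigTau, Finset.prod_mul_distrib]
  simp_rw [this]
  rw [sum_sum_prod (fun r μ0 s0 => pauliProj μ0 s0 (a r) (b r) * pauliTau μ0 s0 (i r) (j r))]
  have h2 : ∀ r : Fin n, (∑ μ0 : Fin 3, ∑ s0 : Bool,
      pauliProj μ0 s0 (a r) (b r) * pauliTau μ0 s0 (i r) (j r))
      = 3 * ((if b r = i r then (1:ℂ) else 0) * (if a r = j r then 1 else 0)) :=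
    fun r => single_kernel (a r) (b r) (i r) (j r)
  simp_rw [h2]
  rw [Finset.prod_mul_distrib, Finset.prod_mul_distrib, Finset.prod_const, Finset.card_univ,
    Fintype.card_fin, prod_delta, prod_delta]

/-- Unbiasedness of the `n`-qubit random-Pauli shadow estimator:
`(1/3ⁿ) Σ_{μ,s} Tr[P_{μ,s} A]·τ_{μ,s} = A`. -/
theorem stmt_15 {n : ℕ} (hn : 1 ≤ n) (A : Matrix (Fin n → Fin 2) (Fin n → Fin 2) ℂ) :
    ((3 : ℂ) ^ n)⁻¹ • ∑ μ : Fin n → Fin 3, ∑ s : Fin n → Bool,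
        (Matrix.trace (bigProj μ s * A)) • bigTau μ s = A := by
  ext i j
  have htr : ∀ (μ : Fin n → Fin 3) (s : Fin n → Bool),
      Matrix.trace (bigProj μ s * A) = ∑ a, ∑ b, bigProj μ s a b * A b a := by
    intro μ s
    simp [Matrix.trace, Matrix.diag, Matrix.mul_apply]
  have key : ∑ μ : Fin n → Fin 3, ∑ s : Fin n → Bool,
      (Matrix.trace (bigProj μ s * A)) * bigTau μ s i j = (3:ℂ)^n * A i j := by
    have step1 : ∀ (μ : Fin n → Fin 3) (s : Fin n → Bool),
        (∑ a, ∑ b, bigProj μ s a b * A b a) * bigTau μ s i j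
        = ∑ a, ∑ b, A b a * (bigProj μ s a b * bigTau μ s i j) := by
      intro μ s
      rw [Finset.sum_mul]
      refine Finset.sum_congr rfl fun a _ => ?_
      rw [Finset.sum_mul]
      exact Finset.sum_congr rfl fun b _ => by ring
    simp_rw [htr, step1]
    rw [sum4_swap (fun μ s a b => A b a * (bigProj μ s a b * bigTau μ s i j))]
    simp_rw [← Finset.mul_sum]
    simp_rw [big_kernel]
    have : ∑ a : Fin n → Fin 2, ∑ b : Fin n → Fin 2,
        A b a * ((3:ℂ)^n * ((if b = i then (1:ℂ) else 0) * (if a = j then 1 else 0)))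
        = (3:ℂ)^n * A i j := by
      rw [Finset.sum_eq_single j]
      · rw [Finset.sum_eq_single i]
        · simp; ring
        · intro b _ hb; simp [hb]
        · simp
      · intro a _ ha; simp [ha]
      · simp
    exact this
  simp only [Matrix.smul_apply, Matrix.sum_apply, smul_eq_mul]
  rw [key]
  field_simp
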